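/- Let Ω, Ω' ⊂ ℝ^d be disjoint bounded measurable sets, γ_δ a symmetric nonnegative kernel, and u, v bounded measurable functions on Ω ∪ Ω' such that all integrals below converge absolutely. Define L u(x) = ∫_{Ω∪Ω'} (u(y)−u(x)) γ_δ(x,y) dy for x ∈ Ω and N u(x) = −∫_Ω (u(y)−u(x)) γ_δ(x,y) dy for x ∈ Ω'. Then (1/2) ∫∫_{(Ω∪Ω')² \ Ω'²} (v(y)−v(x))(u(y)−u(x)) γ_δ(x,y) dy dx = −∫_Ω v(x) L u(x) dx + ∫_{Ω'} v(x) N u(x) dx. -/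

import Mathlib

open MeasureTheory Set

/-!
Since `γ` is symmetric and the domain `(Ω ∪ Ω')² \ Ω'²` is invariant under `(x, y) ↦ (y, x)`,
exchanging the variables shows that the integral of `(v y - v x) (u y - u x) γ(x, y)` over it is
twice that of `-v x (u y - u x) γ(x, y)`. The domain is the disjoint union of `Ω × (Ω ∪ Ω')` and
`Ω' × Ω`, and Fubini's theorem on these two rectangles produces the `L` and `N` terms.
-/

section SwapInvariant

variable {α E : Type*} [MeasurableSpace α] [NormedAddCommGroup E] {μ : Measure α} [SFinite μ]
  {s : Set (α × α)}

theorem setIntegral_comp_swap [NormedSpace ℝ E] (hs : Prod.swap ⁻¹' s = s) (f : α × α → E) :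
    ∫ p in s, f p.swap ∂μ.prod μ = ∫ p in s, f p ∂μ.prod μ := by
  conv_lhs => rw [← hs]
  exact Measure.measurePreserving_swap.setIntegral_preimage_emb
    MeasurableEquiv.prodComm.measurableEmbedding f s

theorem MeasureTheory.IntegrableOn.comp_swap (hs : Prod.swap ⁻¹' s = s) {f : α × α → E}
    (hf : IntegrableOn f s (μ.prod μ)) : IntegrableOn (fun p ↦ f p.swap) s (μ.prod μ) := by
  rw [← hs]
  exact (Measure.measurePreserving_swap.integrableOn_comp_preimage
    MeasurableEquiv.prodComm.measurableEmbedding).mpr hf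

theorem setIntegral_add_comp_swap [NormedSpace ℝ E] (hs : Prod.swap ⁻¹' s = s) {f : α × α → E}
    (hf : IntegrableOn f s (μ.prod μ)) :
    ∫ p in s, (f p + f p.swap) ∂μ.prod μ = (2 : ℝ) • ∫ p in s, f p ∂μ.prod μ := by
  rw [integral_add hf (hf.comp_swap hs), setIntegral_comp_swap hs, two_smul]

theorem setIntegral_sub_mul_sub_mul_eq_neg_two_mul (hs : Prod.swap ⁻¹' s = s) {K : α → α → ℝ}
    (hK : ∀ x y, K x y = K y x) (u v : α → ℝ)
    (h : IntegrableOn (fun p ↦ v p.1 * ((u p.2 - u p.1) * K p.1 p.2)) s (μ.prod μ)) :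
    ∫ p in s, (v p.2 - v p.1) * (u p.2 - u p.1) * K p.1 p.2 ∂μ.prod μ
      = -2 * ∫ p in s, v p.1 * ((u p.2 - u p.1) * K p.1 p.2) ∂μ.prod μ := by
  set F : α × α → ℝ := fun p ↦ v p.1 * ((u p.2 - u p.1) * K p.1 p.2)
  have hF : ∀ p, (v p.2 - v p.1) * (u p.2 - u p.1) * K p.1 p.2 = -(F p + F p.swap) := by
    rintro ⟨x, y⟩
    simp only [F, Prod.swap_prod_mk, hK y x]
    ring
  simp_rw [hF, integral_neg, setIntegral_add_comp_swap hs h, smul_eq_mul, neg_mul]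

end SwapInvariant

theorem swap_preimage_union_prod_sdiff_prod {α : Type*} (s t : Set α) :
    Prod.swap ⁻¹' ((s ∪ t) ×ˢ (s ∪ t) \ t ×ˢ t) = (s ∪ t) ×ˢ (s ∪ t) \ t ×ˢ t := by
  ext ⟨x, y⟩
  simp only [mem_preimage, Prod.swap_prod_mk, mem_sdiff, mem_prod]
  tauto

theorem union_prod_sdiff_prod_eq_union {α : Type*} {s t : Set α} (hst : Disjoint s t) :
    (s ∪ t) ×ˢ (s ∪ t) \ t ×ˢ t = s ×ˢ (s ∪ t) ∪ t ×ˢ s := by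
  ext ⟨x, y⟩
  have hx := hst.notMem_of_mem_left (a := x)
  have hy := hst.notMem_of_mem_left (a := y)
  simp only [mem_sdiff, mem_prod, mem_union]
  tauto

theorem setIntegral_prod_mul_left {α β 𝕜 : Type*} [MeasurableSpace α] [MeasurableSpace β]
    [RCLike 𝕜] {μ : Measure α} {ν : Measure β} [SFinite μ] [SFinite ν] {s : Set α} {t : Set β}
    (f : α → 𝕜) (g : α → β → 𝕜)
    (hfg : IntegrableOn (fun p ↦ f p.1 * g p.1 p.2) (s ×ˢ t) (μ.prod ν)) :
    ∫ p in s ×ˢ t, f p.1 * g p.1 p.2 ∂μ.prod ν = ∫ x in s, f x * ∫ y in t, g x y ∂ν ∂μ := by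
  simp_rw [setIntegral_prod _ hfg, integral_const_mul]

theorem nonlocal_greens_first_identity_neumann_general
    (d : ℕ) (Ω Ω' : Set (EuclideanSpace ℝ (Fin d)))
    (hΩm : MeasurableSet Ω) (hΩ'm : MeasurableSet Ω')
    (hdisj : Disjoint Ω Ω')
    (γ : EuclideanSpace ℝ (Fin d) → EuclideanSpace ℝ (Fin d) → ℝ)
    (hγsymm : ∀ x y, γ x y = γ y x)
    (u v : EuclideanSpace ℝ (Fin d) → ℝ)
    (hintvu : IntegrableOn
      (fun p : EuclideanSpace ℝ (Fin d) × EuclideanSpace ℝ (Fin d) =>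
        v p.1 * (u p.2 - u p.1) * γ p.1 p.2)
      (((Ω ∪ Ω') ×ˢ (Ω ∪ Ω')) \ (Ω' ×ˢ Ω'))) :
    (1 / 2 : ℝ) *
        ∫ p in ((Ω ∪ Ω') ×ˢ (Ω ∪ Ω')) \ (Ω' ×ˢ Ω'),
          (v p.2 - v p.1) * (u p.2 - u p.1) * γ p.1 p.2
      = - (∫ x in Ω, v x * ∫ y in Ω ∪ Ω', (u y - u x) * γ x y)
        + ∫ x in Ω', v x * (- ∫ y in Ω, (u y - u x) * γ x y) := by
  have hint : IntegrableOn (fun p ↦ v p.1 * ((u p.2 - u p.1) * γ p.1 p.2))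
      ((Ω ∪ Ω') ×ˢ (Ω ∪ Ω') \ Ω' ×ˢ Ω') (volume.prod volume) := by
    simpa only [mul_assoc, Measure.volume_eq_prod] using hintvu
  have hD := union_prod_sdiff_prod_eq_union hdisj
  obtain ⟨hintΩ, hintΩ'⟩ := integrableOn_union.mp (hD ▸ hint)
  rw [Measure.volume_eq_prod, setIntegral_sub_mul_sub_mul_eq_neg_two_mul
      (swap_preimage_union_prod_sdiff_prod Ω Ω') hγsymm u v hint, hD,
    setIntegral_union (disjoint_prod.mpr (Or.inl hdisj)) (hΩ'm.prod hΩm) hintΩ hintΩ',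
    setIntegral_prod_mul_left v (fun x y ↦ (u y - u x) * γ x y) hintΩ,
    setIntegral_prod_mul_left v (fun x y ↦ (u y - u x) * γ x y) hintΩ']
  simp_rw [mul_neg, integral_neg]
  ring

/-- nonlocal Green's first identity with Neumann operator:
`(1/2) ∫∫_{(Ω∪Ω')² \ Ω'²} (v(y)−v(x))(u(y)−u(x)) γ(x,y) dy dx
  = −∫_Ω v L u dx + ∫_{Ω'} v N u dx`, where `L u(x) = ∫_{Ω∪Ω'} (u(y)−u(x)) γ(x,y) dy`
and `N u(x) = −∫_Ω (u(y)−u(x)) γ(x,y) dy`. -/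
theorem nonlocal_greens_first_identity_neumann
    (d : ℕ) (Ω Ω' : Set (EuclideanSpace ℝ (Fin d)))
    (hΩm : MeasurableSet Ω) (hΩ'm : MeasurableSet Ω')
    (hdisj : Disjoint Ω Ω')
    (hΩbdd : Bornology.IsBounded Ω) (hΩ'bdd : Bornology.IsBounded Ω')
    (γ : EuclideanSpace ℝ (Fin d) → EuclideanSpace ℝ (Fin d) → ℝ)
    (hγsymm : ∀ x y, γ x y = γ y x) (hγnn : ∀ x y, 0 ≤ γ x y)
    (u v : EuclideanSpace ℝ (Fin d) → ℝ)
    (hub : ∃ M, ∀ x ∈ Ω ∪ Ω', |u x| ≤ M) (hvb : ∃ M, ∀ x ∈ Ω ∪ Ω', |v x| ≤ M)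
    (hum : Measurable u) (hvm : Measurable v)
    (hint : IntegrableOn
      (fun p : EuclideanSpace ℝ (Fin d) × EuclideanSpace ℝ (Fin d) =>
        (v p.2 - v p.1) * (u p.2 - u p.1) * γ p.1 p.2)
      (((Ω ∪ Ω') ×ˢ (Ω ∪ Ω')) \ (Ω' ×ˢ Ω')))
    (hintvu : IntegrableOn
      (fun p : EuclideanSpace ℝ (Fin d) × EuclideanSpace ℝ (Fin d) =>
        v p.1 * (u p.2 - u p.1) * γ p.1 p.2)
      (((Ω ∪ Ω') ×ˢ (Ω ∪ Ω')) \ (Ω' ×ˢ Ω'))) :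
    (1 / 2 : ℝ) *
        ∫ p in ((Ω ∪ Ω') ×ˢ (Ω ∪ Ω')) \ (Ω' ×ˢ Ω'),
          (v p.2 - v p.1) * (u p.2 - u p.1) * γ p.1 p.2
      = - (∫ x in Ω, v x * ∫ y in Ω ∪ Ω', (u y - u x) * γ x y)
        + ∫ x in Ω', v x * (- ∫ y in Ω, (u y - u x) * γ x y) :=
  nonlocal_greens_first_identity_neumann_general d Ω Ω' hΩm hΩ'm hdisj γ hγsymm u v hintvu
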